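/- Let G be a second countable locally compact group, π a unitary representation of G on a separable complex Hilbert space H, and c ∈ Z¹(G,π). If c is evanescent, then c is an almost coboundary, i.e. c lies in the closure of B¹(G,π) in Z¹(G,π) for the topology of uniform convergence on compact subsets of G. -/

import Mathlib

noncomputable section

open MeasureTheory Filter Topology Pointwise

namespace Evan

variable {𝕜 : Type} [RCLike 𝕜]
variable {G : Type} [Group G] [TopologicalSpace G] [IsTopologicalGroup G]
variable {H : Type} [NormedAddCommGroup H] [InnerProductSpace 𝕜 H] [CompleteSpace H]

/-- A continuous unitary (orthogonal, when `𝕜 = ℝ`) representation of `G` on `H`: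
a homomorphism into the unitary group which is continuous for the topology
of pointwise norm convergence. -/
structure IsUnitaryRep (π : G →* (H →L[𝕜] H)) : Prop where
  mem_unitary : ∀ g, π g ∈ unitary (H →L[𝕜] H)
  cont : ∀ ξ : H, Continuous fun g => π g ξ

/-- The commutant `π(G)'` of a representation. -/
def commutant (π : G →* (H →L[𝕜] H)) : Set (H →L[𝕜] H) :=
  {T | ∀ g, T * π g = π g * T}

/-- The bicommutant `π(G)''`, i.e. the von Neumann algebra generated by `π(G)`. -/
def bicommutant (π : G →* (H →L[𝕜] H)) : Set (H →L[𝕜] H) :=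
  Set.centralizer (commutant π)

/-- Closure of a set of operators in the weak operator topology. -/
def wotClosure (𝕜 : Type) {H : Type} [RCLike 𝕜] [NormedAddCommGroup H]
    [InnerProductSpace 𝕜 H] (S : Set (H →L[𝕜] H)) : Set (H →L[𝕜] H) :=
  (ContinuousLinearMapWOT.ofCLM : (H →L[𝕜] H) → (H →WOT[𝕜] H)) ⁻¹' closure ((ContinuousLinearMapWOT.ofCLM : (H →L[𝕜] H) → (H →WOT[𝕜] H)) '' S)

/-- A continuous `1`-cocycle for the representation `π`. -/
def IsCocycle (π : G →* (H →L[𝕜] H)) (c : G → H) : Prop :=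
  Continuous c ∧ ∀ g h : G, c (g * h) = c g + π g (c h)

/-- A coboundary: `c g = ξ - π g ξ` for some `ξ`. -/
def IsCoboundary (π : G →* (H →L[𝕜] H)) (c : G → H) : Prop :=
  ∃ ξ : H, ∀ g : G, c g = ξ - π g ξ

/-- `c` is an almost coboundary: it lies in the closure of the set of coboundaries for
the topology of uniform convergence on compact subsets of `G`. -/
def IsAlmostCoboundary (π : G →* (H →L[𝕜] H)) (c : G → H) : Prop :=
  ∀ Q : Set G, IsCompact Q → ∀ ε : ℝ, 0 < ε → ∃ ξ : H, ∀ g ∈ Q, ‖c g - (ξ - π g ξ)‖ ≤ ε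

/-- The reduction ideal `I(c) = {T ∈ π(G)' : T·c ∈ B¹(G,π)}`. -/
def reductionIdeal (π : G →* (H →L[𝕜] H)) (c : G → H) : Set (H →L[𝕜] H) :=
  {T | T ∈ commutant π ∧ IsCoboundary π fun g => T (c g)}

/-- `c` is evanescent: `I(c)` is dense in `π(G)'` for the weak operator topology. -/
def IsEvanescent (π : G →* (H →L[𝕜] H)) (c : G → H) : Prop :=
  commutant π ⊆ wotClosure 𝕜 (reductionIdeal π c)

/-- `c` is irreducible: `I(c) = {0}`. -/
def IsIrreducibleCocycle (π : G →* (H →L[𝕜] H)) (c : G → H) : Prop :=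
  reductionIdeal π c = {0}

/-- `π` has almost invariant vectors. -/
def HasAlmostInvariantVectors (π : G →* (H →L[𝕜] H)) : Prop :=
  ∀ Q : Set G, IsCompact Q → ∀ ε : ℝ, 0 < ε →
    ∃ ξ : H, ‖ξ‖ = 1 ∧ ∀ g ∈ Q, ‖π g ξ - ξ‖ ≤ ε

/-- `π` is irreducible: the only closed invariant subspaces are `⊥` and `⊤`. -/
def IsIrreducibleRep (π : G →* (H →L[𝕜] H)) : Prop :=
  ∀ K : Submodule 𝕜 H, IsClosed (K : Set H) → (∀ g : G, ∀ x ∈ K, π g x ∈ K) →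
    K = ⊥ ∨ K = ⊤

/-- A projection: a self-adjoint idempotent. -/
def IsProjection (p : H →L[𝕜] H) : Prop :=
  IsSelfAdjoint p ∧ p * p = p

/-- The reduction ideal of the projected cocycle `p·c`, viewed as a cocycle for the
subrepresentation of `π` on `pH`, whose commutant is identified with the corner
`p π(G)' p` (a von Neumann algebra with unit `p`). -/
def projReductionIdeal (π : G →* (H →L[𝕜] H)) (c : G → H) (p : H →L[𝕜] H) :
    Set (H →L[𝕜] H) :=
  {T | T ∈ commutant π ∧ p * T = T ∧ T * p = T ∧
    ∃ ξ : H, p ξ = ξ ∧ ∀ g : G, T (c g) = ξ - π g ξ}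

/-- The projected cocycle `p·c` is evanescent: its reduction ideal is dense, in the weak
operator topology, in the commutant of the subrepresentation on `pH` (the corner
`p π(G)' p`). -/
def ProjIsEvanescent (π : G →* (H →L[𝕜] H)) (c : G → H) (p : H →L[𝕜] H) : Prop :=
  {T | T ∈ commutant π ∧ p * T = T ∧ T * p = T} ⊆
    wotClosure 𝕜 (projReductionIdeal π c p)

/-- The projected cocycle `p·c` is irreducible: its reduction ideal is `{0}`. -/
def ProjIsIrreducible (π : G →* (H →L[𝕜] H)) (c : G → H) (p : H →L[𝕜] H) : Prop :=
  projReductionIdeal π c p = {0}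

/-- `G` is weak identity excluding (WIE): every irreducible unitary representation of `G`
on a separable complex Hilbert space that has almost invariant vectors is trivial. -/
def IsWIE (G : Type) [Group G] [TopologicalSpace G] [IsTopologicalGroup G] : Prop :=
  ∀ (H : Type) (_ : NormedAddCommGroup H) (_ : InnerProductSpace ℂ H)
    (_ : CompleteSpace H) (_ : TopologicalSpace.SeparableSpace H)
    (π : G →* (H →L[ℂ] H)), IsUnitaryRep π → IsIrreducibleRep π →
      HasAlmostInvariantVectors π → ∀ g : G, π g = 1


section AuxProofs
set_option linter.unusedSectionVars false
set_option maxHeartbeats 1000000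

section AuxAlg
open ContinuousLinearMap
variable {π : G →* (H →L[𝕜] H)} {c : G → H}

lemma one_mem_commutant : (1 : H →L[𝕜] H) ∈ commutant π := fun g => by
  rw [one_mul, mul_one]

lemma mul_mem_commutant {X Y : H →L[𝕜] H} (hX : X ∈ commutant π) (hY : Y ∈ commutant π) :
    X * Y ∈ commutant π := fun g => by
  rw [mul_assoc, hY g, ← mul_assoc, hX g, mul_assoc]

lemma star_pi (hπ : IsUnitaryRep π) (g : G) : star (π g) = π g⁻¹ := by
  have h1 : π g * π g⁻¹ = 1 := by rw [← map_mul, mul_inv_cancel, map_one]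
  have h2 : star (π g) * π g = 1 := (Unitary.mem_iff.mp (hπ.mem_unitary g)).1
  calc star (π g) = star (π g) * (π g * π g⁻¹) := by rw [h1, mul_one]
    _ = (star (π g) * π g) * π g⁻¹ := by rw [mul_assoc]
    _ = π g⁻¹ := by rw [h2, one_mul]

lemma star_mem_commutant (hπ : IsUnitaryRep π) {T : H →L[𝕜] H} (hT : T ∈ commutant π) :
    star T ∈ commutant π := fun g => by
  have h1 : star (π g⁻¹) = π g := by rw [star_pi hπ, inv_inv]
  calc star T * π g = star T * star (π g⁻¹) := by rw [h1]
    _ = star (π g⁻¹ * T) := by rw [star_mul]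
    _ = star (T * π g⁻¹) := by rw [hT g⁻¹]
    _ = star (π g⁻¹) * star T := by rw [star_mul]
    _ = π g * star T := by rw [h1]

lemma unit_inv_mem_commutant {A : H →L[𝕜] H} (hA : A ∈ commutant π) (h : IsUnit A) :
    (↑h.unit⁻¹ : H →L[𝕜] H) ∈ commutant π := fun g => by
  have h1 : (↑h.unit⁻¹ : H →L[𝕜] H) * A = 1 := h.unit.inv_mul
  have h2 : A * (↑h.unit⁻¹ : H →L[𝕜] H) = 1 := h.unit.mul_inv
  calc (↑h.unit⁻¹ : H →L[𝕜] H) * π g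
      = ↑h.unit⁻¹ * (π g * (A * ↑h.unit⁻¹)) := by rw [h2, mul_one]
    _ = ↑h.unit⁻¹ * ((π g * A) * ↑h.unit⁻¹) := by rw [mul_assoc]
    _ = ↑h.unit⁻¹ * ((A * π g) * ↑h.unit⁻¹) := by rw [hA g]
    _ = (↑h.unit⁻¹ * A) * (π g * ↑h.unit⁻¹) := by simp only [mul_assoc]
    _ = π g * ↑h.unit⁻¹ := by rw [h1, one_mul]

lemma zero_mem_reductionIdeal : (0 : H →L[𝕜] H) ∈ reductionIdeal π c := by
  refine ⟨fun g => by rw [zero_mul, mul_zero], 0, fun g => by simp⟩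

lemma smul_mem_reductionIdeal (z : 𝕜) {T : H →L[𝕜] H} (hT : T ∈ reductionIdeal π c) :
    z • T ∈ reductionIdeal π c := by
  obtain ⟨hTc, ξ, hξ⟩ := hT
  refine ⟨fun g => by rw [smul_mul_assoc, hTc g, mul_smul_comm], z • ξ, fun g => ?_⟩
  have h := hξ g
  simp only at h
  simp only [ContinuousLinearMap.smul_apply, h, smul_sub, (π g).map_smul]

lemma add_mem_reductionIdeal {T S : H →L[𝕜] H} (hT : T ∈ reductionIdeal π c)
    (hS : S ∈ reductionIdeal π c) : T + S ∈ reductionIdeal π c := by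
  obtain ⟨hTc, ξ, hξ⟩ := hT
  obtain ⟨hSc, η, hη⟩ := hS
  refine ⟨fun g => by rw [add_mul, hTc g, hSc g, mul_add], ξ + η, fun g => ?_⟩
  have h := hξ g
  have h' := hη g
  simp only at h h'
  simp only [ContinuousLinearMap.add_apply, h, h', map_add]
  abel

lemma mul_mem_reductionIdeal {X T : H →L[𝕜] H} (hX : X ∈ commutant π)
    (hT : T ∈ reductionIdeal π c) : X * T ∈ reductionIdeal π c := by
  obtain ⟨hTc, ξ, hξ⟩ := hT
  refine ⟨mul_mem_commutant hX hTc, X ξ, fun g => ?_⟩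
  have hXg : X (π g ξ) = π g (X ξ) := by
    have := hX g
    calc X (π g ξ) = (X * π g) ξ := rfl
      _ = (π g * X) ξ := by rw [this]
      _ = π g (X ξ) := rfl
  have h := hξ g
  simp only at h
  calc (X * T) (c g) = X (T (c g)) := rfl
    _ = X (ξ - π g ξ) := by rw [h]
    _ = X ξ - π g (X ξ) := by rw [map_sub, hXg]

end AuxAlg

section Mazur
open RCLike

lemma mazur {F : Type} [NormedAddCommGroup F] [InnerProductSpace ℂ F] [CompleteSpace F]
    {C : Set F}
    (hC : ∀ x ∈ C, ∀ y ∈ C, ∀ a b : ℝ, 0 ≤ a → 0 ≤ b → a + b = 1 →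
      (a:ℂ) • x + (b:ℂ) • y ∈ C)
    (hne : C.Nonempty) {x : F}
    (h : ∀ w : F, ∀ ε : ℝ, 0 < ε → ∃ y ∈ C, |re (inner (𝕜 := ℂ) (x - y) w)| < ε) :
    x ∈ closure C := by
  letI : InnerProductSpace ℝ F := InnerProductSpace.rclikeToReal ℂ F
  have hC' : Convex ℝ C := by
    intro p hp q hq a b ha hb hab
    exact hC p hp q hq a b ha hb hab
  obtain ⟨v, hvK, hv⟩ := exists_norm_eq_iInf_of_complete_convex hne.closure
    isClosed_closure.isComplete hC'.closure x
  have hproj := (norm_eq_iInf_iff_real_inner_le_zero hC'.closure hvK).mp hv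
  by_cases hd : ‖x - v‖ = 0
  · have hx : x = v := by rwa [norm_eq_zero, sub_eq_zero] at hd
    exact hx ▸ hvK
  · exfalso
    have hd' : 0 < ‖x - v‖ := lt_of_le_of_ne (norm_nonneg _) (Ne.symm hd)
    obtain ⟨y, hyC, hy⟩ := h (x - v) (‖x - v‖ ^ 2 / 2) (by positivity)
    have h1 : (inner (𝕜 := ℝ) (x - v) (y - v) : ℝ) ≤ 0 := hproj y (subset_closure hyC)
    have h2 : (inner (𝕜 := ℝ) (x - y) (x - v) : ℝ)
        = inner (𝕜 := ℝ) (x - v) (x - v) - inner (𝕜 := ℝ) (x - v) (y - v) := by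
      have hxy : x - y = (x - v) - (y - v) := by abel
      rw [hxy, inner_sub_left, real_inner_comm (y - v)]
    have h3 : (inner (𝕜 := ℝ) (x - v) (x - v) : ℝ) = ‖x - v‖ ^ 2 :=
      real_inner_self_eq_norm_sq _
    have h4 : (inner (𝕜 := ℝ) (x - y) (x - v) : ℝ) = re (inner (𝕜 := ℂ) (x - y) (x - v)) := rfl
    have h5 : |re (inner (𝕜 := ℂ) (x - y) (x - v))| < ‖x - v‖ ^ 2 / 2 := hy
    rw [← h4] at h5
    have h6 : ‖x - v‖ ^ 2 ≤ inner (𝕜 := ℝ) (x - y) (x - v) := by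
      rw [h2, h3]; linarith
    have := abs_lt.mp h5
    linarith

end Mazur

section ComplexAux
variable {E : Type} [NormedAddCommGroup E] [InnerProductSpace ℂ E] [CompleteSpace E]

section Density
open ContinuousLinearMap RCLike

instance pilpCompleteSpace {ι : Type} [Fintype ι] :
    CompleteSpace (PiLp 2 (fun _ : ι => E)) :=
  inferInstance

lemma pilp_coord_norm_le {ι : Type} [Fintype ι] (x : PiLp 2 (fun _ : ι => E)) (j : ι) :
    ‖x j‖ ≤ ‖x‖ := by
  have h : re (inner (𝕜 := ℂ) x x) = ‖x‖ ^ 2 := inner_self_eq_norm_sq x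
  rw [PiLp.inner_apply, map_sum] at h
  have h2 : ∀ i : ι, re (inner (𝕜 := ℂ) (x i) (x i)) = ‖x i‖ ^ 2 :=
    fun i => inner_self_eq_norm_sq (x i)
  simp only [h2] at h
  have h3 : ‖x j‖ ^ 2 ≤ ∑ i : ι, ‖x i‖ ^ 2 :=
    Finset.single_le_sum (fun i _ => sq_nonneg ‖x i‖) (Finset.mem_univ j)
  rw [h] at h3
  nlinarith [norm_nonneg (x j), norm_nonneg x]

lemma dense_sot {π : G →* (E →L[ℂ] E)} {c : G → E} (he : IsEvanescent π c)
    (ι : Type) [Fintype ι] (v : ι → E) {δ : ℝ} (hδ : 0 < δ) :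
    ∃ T ∈ reductionIdeal π c,
      ∀ i, ‖v i - T (v i)‖ ≤ δ ∧ ‖v i - (ContinuousLinearMap.adjoint T) (v i)‖ ≤ δ := by
  classical
  set I := reductionIdeal π c with hI
  -- the big Hilbert space
  let F := PiLp 2 (fun _ : ι ⊕ ι => E)
  let Φ : (E →L[ℂ] E) → F := fun T =>
    (WithLp.equiv 2 (∀ _ : ι ⊕ ι, E)).symm
      (Sum.elim (fun i => T (v i)) (fun i => (ContinuousLinearMap.adjoint T) (v i)))
  have hΦ_coord : ∀ T (j : ι ⊕ ι), Φ T j =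
      Sum.elim (fun i => T (v i)) (fun i => (ContinuousLinearMap.adjoint T) (v i)) j :=
    fun T j => rfl
  have hadj1 : ContinuousLinearMap.adjoint (1 : E →L[ℂ] E) = 1 := by
    rw [← star_eq_adjoint, star_one]
  set C : Set F := Φ '' I with hC
  -- x₀ = Φ 1
  have h1 : (ContinuousLinearMapWOT.ofCLM : (E →L[ℂ] E) → (E →WOT[ℂ] E)) 1 ∈
      closure ((ContinuousLinearMapWOT.ofCLM : (E →L[ℂ] E) → (E →WOT[ℂ] E)) '' I) := he one_mem_commutant
  -- convexity
  have hconv : ∀ x ∈ C, ∀ y ∈ C, ∀ a b : ℝ, 0 ≤ a → 0 ≤ b → a + b = 1 →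
      (a:ℂ) • x + (b:ℂ) • y ∈ C := by
    rintro x ⟨T, hT, rfl⟩ y ⟨S, hS, rfl⟩ a b _ _ _
    refine ⟨(a:ℂ) • T + (b:ℂ) • S,
      add_mem_reductionIdeal (smul_mem_reductionIdeal _ hT) (smul_mem_reductionIdeal _ hS), ?_⟩
    have hadj : ContinuousLinearMap.adjoint ((a:ℂ) • T + (b:ℂ) • S)
        = (a:ℂ) • ContinuousLinearMap.adjoint T + (b:ℂ) • ContinuousLinearMap.adjoint S := by
      rw [map_add, map_smulₛₗ, map_smulₛₗ]
      simp [Complex.conj_ofReal]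
    ext j
    have hcoord : (((a:ℂ) • Φ T + (b:ℂ) • Φ S) : F) j = (a:ℂ) • (Φ T j) + (b:ℂ) • (Φ S j) := rfl
    rw [hcoord, hΦ_coord, hΦ_coord, hΦ_coord, hadj]
    rcases j with i | i
    · simp
    · simp
  have hne : C.Nonempty := ⟨Φ 0, ⟨0, zero_mem_reductionIdeal, rfl⟩⟩
  -- weak approximation property
  have key : ∀ w : F, ∀ ε : ℝ, 0 < ε →
      ∃ y ∈ C, |re (inner (𝕜 := ℂ) (Φ 1 - y) w)| < ε := by
    intro w ε hε
    set f : (E →WOT[ℂ] E) → ℝ := fun A =>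
      (∑ i : ι, (re (inner (𝕜 := ℂ) (v i) (w (Sum.inl i)))
        - re ((starRingEnd ℂ) (innerSL ℂ (w (Sum.inl i)) (A (v i))))))
      + ∑ i : ι, (re (inner (𝕜 := ℂ) (v i) (w (Sum.inr i)))
        - re (innerSL ℂ (v i) (A (w (Sum.inr i))))) with hf
    have hfc : Continuous f := by
      apply Continuous.add
      · apply continuous_finset_sum
        intro i _
        exact (continuous_const.sub (RCLike.continuous_re.comp
          (RCLike.continuous_conj.comp
            (ContinuousLinearMapWOT.continuous_dual_apply (v i) (innerSL ℂ (w (Sum.inl i)))))))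
      · apply continuous_finset_sum
        intro i _
        exact (continuous_const.sub (RCLike.continuous_re.comp
          (ContinuousLinearMapWOT.continuous_dual_apply (w (Sum.inr i)) (innerSL ℂ (v i)))))
    -- f ∘ toWOT computes the pairing
    have hfT : ∀ T : E →L[ℂ] E, f ((ContinuousLinearMapWOT.ofCLM : (E →L[ℂ] E) → (E →WOT[ℂ] E)) T)
        = re (inner (𝕜 := ℂ) (Φ 1 - Φ T) w) := by
      intro T
      have happ : ∀ x : E, ((ContinuousLinearMapWOT.ofCLM : (E →L[ℂ] E) → (E →WOT[ℂ] E)) T) x = T x := fun x => rfl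
      have hrhs : re (inner (𝕜 := ℂ) (Φ 1 - Φ T) w)
          = (∑ i : ι, re (inner (𝕜 := ℂ) (v i) (w (Sum.inl i)))
             + ∑ i : ι, re (inner (𝕜 := ℂ) (v i) (w (Sum.inr i))))
            - (∑ i : ι, re (inner (𝕜 := ℂ) (T (v i)) (w (Sum.inl i)))
               + ∑ i : ι, re (inner (𝕜 := ℂ) ((ContinuousLinearMap.adjoint T) (v i))
                  (w (Sum.inr i)))) := by
        rw [inner_sub_left, map_sub, PiLp.inner_apply, PiLp.inner_apply,
          Fintype.sum_sum_type, Fintype.sum_sum_type, map_add, map_add,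
          map_sum, map_sum, map_sum, map_sum]
        simp only [hΦ_coord, Sum.elim_inl, Sum.elim_inr, ContinuousLinearMap.one_apply, hadj1]
      rw [hrhs, hf]
      simp only [happ, innerSL_apply_apply]
      have e1 : ∀ i : ι, re ((starRingEnd ℂ) (inner (𝕜 := ℂ) (w (Sum.inl i)) (T (v i))))
          = re (inner (𝕜 := ℂ) (T (v i)) (w (Sum.inl i))) := by
        intro i; rw [inner_conj_symm]
      have e2 : ∀ i : ι, re (inner (𝕜 := ℂ) (v i) (T (w (Sum.inr i))))
          = re (inner (𝕜 := ℂ) ((ContinuousLinearMap.adjoint T) (v i)) (w (Sum.inr i))) := by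
        intro i; rw [ContinuousLinearMap.adjoint_inner_left]
      simp only [e1, e2]
      rw [Finset.sum_sub_distrib, Finset.sum_sub_distrib]
      ring
    have hf1 : f ((ContinuousLinearMapWOT.ofCLM : (E →L[ℂ] E) → (E →WOT[ℂ] E)) 1) = 0 := by
      rw [hfT 1]; simp
    have hmem : f ((ContinuousLinearMapWOT.ofCLM : (E →L[ℂ] E) → (E →WOT[ℂ] E)) 1)
        ∈ closure (f '' ((ContinuousLinearMapWOT.ofCLM : (E →L[ℂ] E) → (E →WOT[ℂ] E)) '' I)) :=
      image_closure_subset_closure_image hfc ⟨_, h1, rfl⟩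
    rw [hf1, Metric.mem_closure_iff] at hmem
    obtain ⟨b, ⟨A, ⟨T, hTI, rfl⟩, rfl⟩, hb⟩ := hmem ε hε
    refine ⟨Φ T, ⟨T, hTI, rfl⟩, ?_⟩
    rw [← hfT T]
    simpa [Real.dist_eq, abs_sub_comm] using hb
  have hcl : Φ 1 ∈ closure C := mazur hconv hne key
  rw [Metric.mem_closure_iff] at hcl
  obtain ⟨y, ⟨T, hTI, rfl⟩, hy⟩ := hcl δ hδ
  refine ⟨T, hTI, fun i => ?_⟩
  have hd : ‖Φ 1 - Φ T‖ ≤ δ := by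
    rw [dist_eq_norm] at hy; exact le_of_lt hy
  constructor
  · have := pilp_coord_norm_le (Φ 1 - Φ T) (Sum.inl i)
    have hco : (Φ 1 - Φ T) (Sum.inl i) = v i - T (v i) := by
      show Φ 1 (Sum.inl i) - Φ T (Sum.inl i) = _
      rw [hΦ_coord, hΦ_coord]; simp
    rw [hco] at this
    exact this.trans hd
  · have := pilp_coord_norm_le (Φ 1 - Φ T) (Sum.inr i)
    have hco : (Φ 1 - Φ T) (Sum.inr i) = v i - (ContinuousLinearMap.adjoint T) (v i) := by
      show Φ 1 (Sum.inr i) - Φ T (Sum.inr i) = _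
      rw [hΦ_coord, hΦ_coord]; simp [hadj1]
    rw [hco] at this
    exact this.trans hd

end Density

section Contraction
open ContinuousLinearMap RCLike

lemma contraction {π : G →* (E →L[ℂ] E)} {c : G → E} (hπ : IsUnitaryRep π)
    (he : IsEvanescent π c) (t : Finset E) {ε : ℝ} (hε : 0 < ε) :
    ∃ S ∈ reductionIdeal π c, ‖S‖ ≤ 1 ∧ ∀ u ∈ t, ‖u - S u‖ ≤ ε := by
  classical
  -- bound on the vectors
  set Cb : ℝ := 1 + ∑ u ∈ t, ‖u‖ with hCbdef
  have hCb1 : (1:ℝ) ≤ Cb := by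
    have : (0:ℝ) ≤ ∑ u ∈ t, ‖u‖ := Finset.sum_nonneg fun u _ => norm_nonneg u
    simp [hCbdef]; linarith
  have hCb0 : (0:ℝ) < Cb := lt_of_lt_of_le one_pos hCb1
  have hCbu : ∀ u ∈ t, ‖u‖ ≤ Cb := by
    intro u hu
    have : ‖u‖ ≤ ∑ x ∈ t, ‖x‖ := Finset.single_le_sum (fun x _ => norm_nonneg x) hu
    simp [hCbdef]; linarith
  -- parameters
  set s : ℝ := ε^2 / (2 * Cb^2) with hsdef
  have hs0 : 0 < s := by positivity
  set εp : ℝ := s^2 with hεpdef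
  have hεp0 : 0 < εp := by positivity
  set δ : ℝ := ε^2 / (2 * Cb) with hδdef
  have hδ0 : 0 < δ := by positivity
  -- get T from SOT* density
  obtain ⟨T, hTI, hTest⟩ := dense_sot he {x // x ∈ t} (Subtype.val) hδ0
  have hTc : T ∈ commutant π := hTI.1
  set Tst : E →L[ℂ] E := ContinuousLinearMap.adjoint T with hTstdef
  have hTstc : Tst ∈ commutant π := by
    have := star_mem_commutant hπ hTc
    rwa [star_eq_adjoint] at this
  -- the operator A = T*T + εp
  set A : E →L[ℂ] E := Tst * T + (εp : ℂ) • 1 with hAdef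
  have hAc : A ∈ commutant π := by
    intro g
    have h1 := (mul_mem_commutant hTstc hTc) g
    have h2 : ((εp:ℂ) • (1:E →L[ℂ] E)) * π g = π g * ((εp:ℂ) • 1) := by
      rw [smul_mul_assoc, one_mul, mul_smul_comm, mul_one]
    rw [hAdef, add_mul, mul_add, h1, h2]
  have hA_apply : ∀ x : E, A x = Tst (T x) + (εp : ℂ) • x := by
    intro x
    simp [hAdef, ContinuousLinearMap.add_apply, ContinuousLinearMap.mul_apply,
      ContinuousLinearMap.smul_apply]
  have hAinner : ∀ x : E, inner (𝕜 := ℂ) (A x) x = ((‖T x‖^2 + εp * ‖x‖^2 : ℝ) : ℂ) := by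
    intro x
    rw [hA_apply, inner_add_left, inner_smul_left, hTstdef,
      ContinuousLinearMap.adjoint_inner_left, inner_self_eq_norm_sq_to_K,
      inner_self_eq_norm_sq_to_K]
    push_cast
    rw [Complex.conj_ofReal]
    ring_nf
    exact add_comm _ _
  -- A is invertible
  have hAunit : IsUnit A := by
    apply isUnit_of_forall_le_norm_inner_map A (c := ⟨εp, le_of_lt hεp0⟩)
    · exact_mod_cast hεp0
    · intro x
      rw [hAinner x]
      have h1 : ‖((‖T x‖^2 + εp * ‖x‖^2 : ℝ) : ℂ)‖ = |‖T x‖^2 + εp * ‖x‖^2| :=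
        RCLike.norm_ofReal _
      rw [h1, abs_of_nonneg (by positivity)]
      have : (0:ℝ) ≤ ‖T x‖^2 := sq_nonneg _
      change ‖x‖ ^ 2 * εp ≤ _
      nlinarith [sq_nonneg ‖x‖]
  set Ai : E →L[ℂ] E := (↑hAunit.unit⁻¹ : E →L[ℂ] E) with hAidef
  have hAiA : Ai * A = 1 := hAunit.unit.inv_mul
  have hAAi : A * Ai = 1 := hAunit.unit.mul_inv
  have hAiA_app : ∀ x : E, Ai (A x) = x := by
    intro x
    calc Ai (A x) = (Ai * A) x := rfl
      _ = x := by rw [hAiA]; rfl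
  have hAAi_app : ∀ x : E, A (Ai x) = x := by
    intro x
    calc A (Ai x) = (A * Ai) x := rfl
      _ = x := by rw [hAAi]; rfl
  -- A, Ai selfadjoint
  have hAstar : star A = A := by
    rw [hAdef, star_add, star_mul, star_smul, star_one, hTstdef, ← star_eq_adjoint, star_star]
    simp [Complex.conj_ofReal]
  have hAistar : star Ai = Ai := by
    have h1 : star Ai * A = 1 := by
      rw [← hAstar]
      calc star Ai * star A = star (A * Ai) := by rw [star_mul]
        _ = 1 := by rw [hAAi, star_one]
    calc star Ai = star Ai * (A * Ai) := by rw [hAAi, mul_one]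
      _ = (star Ai * A) * Ai := by rw [mul_assoc]
      _ = Ai := by rw [h1, one_mul]
  have hA_inner : ∀ x y : E, inner (𝕜 := ℂ) (A x) y = inner (𝕜 := ℂ) x (A y) := by
    intro x y
    have := ContinuousLinearMap.adjoint_inner_left A y x
    rwa [← star_eq_adjoint, hAstar] at this
  have hAi_inner : ∀ x y : E, inner (𝕜 := ℂ) (Ai x) y = inner (𝕜 := ℂ) x (Ai y) := by
    intro x y
    have := ContinuousLinearMap.adjoint_inner_left Ai y x
    rwa [← star_eq_adjoint, hAistar] at this
  -- the basic quantitative facts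
  have hq : ∀ x : E, inner (𝕜 := ℂ) x (Ai x)
      = ((‖T (Ai x)‖^2 + εp * ‖Ai x‖^2 : ℝ) : ℂ) := by
    intro x
    calc inner (𝕜 := ℂ) x (Ai x) = inner (𝕜 := ℂ) (A (Ai x)) (Ai x) := by rw [hAAi_app]
      _ = ((‖T (Ai x)‖^2 + εp * ‖Ai x‖^2 : ℝ) : ℂ) := hAinner (Ai x)
  have hre : ∀ x : E, re (inner (𝕜 := ℂ) x (Ai x)) = ‖T (Ai x)‖^2 + εp * ‖Ai x‖^2 := by
    intro x; rw [hq x]; exact RCLike.ofReal_re _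
  have F1 : ∀ x : E, εp * ‖Ai x‖ ≤ ‖x‖ := by
    intro x
    have h1 : εp * ‖Ai x‖^2 ≤ re (inner (𝕜 := ℂ) x (Ai x)) := by
      rw [hre x]; nlinarith [sq_nonneg ‖T (Ai x)‖]
    have h2 : re (inner (𝕜 := ℂ) x (Ai x)) ≤ ‖x‖ * ‖Ai x‖ := re_inner_le_norm x (Ai x)
    rcases eq_or_lt_of_le (norm_nonneg (Ai x)) with h0 | h0
    · rw [← h0]
      simpa using norm_nonneg x
    · have := le_trans h1 h2
      nlinarith
  have F2 : ∀ x : E, ‖T (Ai x)‖ ≤ ‖x‖ / s := by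
    intro x
    have h1 : ‖T (Ai x)‖^2 ≤ re (inner (𝕜 := ℂ) x (Ai x)) := by
      rw [hre x]; nlinarith [sq_nonneg ‖Ai x‖]
    have h2 : re (inner (𝕜 := ℂ) x (Ai x)) ≤ ‖x‖ * ‖Ai x‖ := re_inner_le_norm x (Ai x)
    have h3 : ‖Ai x‖ ≤ ‖x‖ / εp := by
      have := F1 x
      rw [le_div_iff₀ hεp0]; linarith [this]
    have h4 : ‖T (Ai x)‖^2 ≤ ‖x‖^2 / εp := by
      have : ‖x‖ * ‖Ai x‖ ≤ ‖x‖ * (‖x‖ / εp) :=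
        mul_le_mul_of_nonneg_left h3 (norm_nonneg x)
      calc ‖T (Ai x)‖^2 ≤ ‖x‖ * ‖Ai x‖ := le_trans h1 h2
        _ ≤ ‖x‖ * (‖x‖ / εp) := this
        _ = ‖x‖^2 / εp := by ring
    have h5 : ‖x‖^2 / εp = (‖x‖ / s)^2 := by
      rw [hεpdef]; field_simp
    rw [h5] at h4
    have h6 : 0 ≤ ‖x‖ / s := by positivity
    nlinarith [norm_nonneg (T (Ai x))]
  have F3 : ∀ x : E, ‖Ai (Tst x)‖ ≤ ‖x‖ / s := by
    intro x
    have hP : ‖T ∘L Ai‖ ≤ 1/s := by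
      apply ContinuousLinearMap.opNorm_le_bound _ (by positivity)
      intro u
      have := F2 u
      calc ‖(T ∘L Ai) u‖ = ‖T (Ai u)‖ := rfl
        _ ≤ ‖u‖ / s := this
        _ = 1/s * ‖u‖ := by ring
    have hPadj : ContinuousLinearMap.adjoint (T ∘L Ai) = Ai ∘L Tst := by
      have hAiadj : ContinuousLinearMap.adjoint Ai = Ai := by
        rw [← star_eq_adjoint, hAistar]
      rw [ContinuousLinearMap.adjoint_comp, hAiadj, hTstdef]
    have hnorm : ‖Ai ∘L Tst‖ = ‖T ∘L Ai‖ := by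
      rw [← hPadj]
      exact LinearIsometryEquiv.norm_map (ContinuousLinearMap.adjoint) (T ∘L Ai)
    calc ‖Ai (Tst x)‖ = ‖(Ai ∘L Tst) x‖ := rfl
      _ ≤ ‖Ai ∘L Tst‖ * ‖x‖ := ContinuousLinearMap.le_opNorm _ x
      _ ≤ 1/s * ‖x‖ := by
          apply mul_le_mul_of_nonneg_right _ (norm_nonneg x)
          rw [hnorm]; exact hP
      _ = ‖x‖ / s := by ring
  -- the element S
  set S : E →L[ℂ] E := (Ai * Tst) * T with hSdef
  have hS_mem : S ∈ reductionIdeal π c :=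
    mul_mem_reductionIdeal (mul_mem_commutant (unit_inv_mem_commutant hAc hAunit) hTstc) hTI
  have hSR : (1 : E →L[ℂ] E) - S = (εp:ℂ) • Ai := by
    have h1 : Tst * T = A - (εp:ℂ) • 1 := by rw [hAdef]; abel
    rw [hSdef, mul_assoc, h1, mul_sub, hAiA, mul_smul_comm, mul_one]
    abel
  have hSx : ∀ x : E, x - S x = (εp:ℂ) • Ai x := by
    intro x
    calc x - S x = ((1 : E →L[ℂ] E) - S) x := by
          rw [ContinuousLinearMap.sub_apply, ContinuousLinearMap.one_apply]
      _ = (εp:ℂ) • Ai x := by rw [hSR]; rfl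
  -- norm bound
  have hqpos : ∀ x : E, 0 ≤ re (inner (𝕜 := ℂ) x (Ai x)) := by
    intro x; rw [hre x]; positivity
  have hSnorm : ‖S‖ ≤ 1 := by
    apply ContinuousLinearMap.opNorm_le_bound _ zero_le_one
    intro x
    rw [one_mul]
    have h1 : ‖S x‖^2 ≤ ‖x‖^2 := by
      have hx : S x = x - (εp:ℂ) • Ai x := by
        have := hSx x; linear_combination (norm := module) -this
      rw [hx, norm_sub_sq (𝕜 := ℂ)]
      have h2 : re (inner (𝕜 := ℂ) x ((εp:ℂ) • Ai x)) = εp * re (inner (𝕜 := ℂ) x (Ai x)) := by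
        rw [inner_smul_right]
        simp [Complex.ofReal_re]
      have h3 : ‖(εp:ℂ) • Ai x‖^2 = εp^2 * ‖Ai x‖^2 := by
        rw [norm_smul]
        simp [Complex.norm_real, abs_of_pos hεp0]
        ring
      have h4 : εp^2 * ‖Ai x‖^2 ≤ εp * re (inner (𝕜 := ℂ) x (Ai x)) := by
        rw [hre x]; nlinarith [sq_nonneg ‖T (Ai x)‖]
      rw [h2, h3]
      nlinarith [hqpos x]
    nlinarith [norm_nonneg (S x), norm_nonneg x]
  refine ⟨S, hS_mem, hSnorm, ?_⟩
  -- final estimate on the vectors of t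
  intro u hu
  obtain ⟨hu1, hu2⟩ := hTest ⟨u, hu⟩
  simp only at hu1 hu2
  have huCb : ‖u‖ ≤ Cb := hCbu u hu
  have hsplit : (εp:ℂ) • Ai u = (εp:ℂ) • Ai (u - Tst u) + (εp:ℂ) • Ai (Tst u) := by
    rw [map_sub, smul_sub]; abel
  have key : ‖(εp:ℂ) • Ai u‖^2 ≤ δ * ‖u‖ + s * ‖u‖^2 := by
    have e0 : ‖(εp:ℂ) • Ai u‖^2 = εp^2 * ‖Ai u‖^2 := by
      rw [norm_smul]; simp [Complex.norm_real, abs_of_pos hεp0]; ring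
    have e1 : εp^2 * ‖Ai u‖^2 ≤ εp * re (inner (𝕜 := ℂ) u (Ai u)) := by
      rw [hre u]; nlinarith [sq_nonneg ‖T (Ai u)‖]
    -- εp * re ⟪u, Ai u⟫ = re ⟪(εp:ℂ) • Ai u, u⟫ ... decompose
    have e2 : εp * re (inner (𝕜 := ℂ) u (Ai u))
        = re (inner (𝕜 := ℂ) ((εp:ℂ) • Ai (u - Tst u)) u)
          + re (inner (𝕜 := ℂ) ((εp:ℂ) • Ai (Tst u)) u) := by
      have : inner (𝕜 := ℂ) ((εp:ℂ) • Ai u) u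
          = inner (𝕜 := ℂ) ((εp:ℂ) • Ai (u - Tst u)) u
            + inner (𝕜 := ℂ) ((εp:ℂ) • Ai (Tst u)) u := by
        rw [← inner_add_left, ← hsplit]
      have h5 : re (inner (𝕜 := ℂ) ((εp:ℂ) • Ai u) u) = εp * re (inner (𝕜 := ℂ) (Ai u) u) := by
        rw [inner_smul_left]
        simp [Complex.conj_ofReal]
      rw [inner_re_symm u (Ai u), ← h5, this, map_add]
    have e3 : re (inner (𝕜 := ℂ) ((εp:ℂ) • Ai (u - Tst u)) u) ≤ δ * ‖u‖ := by
      have h6 : ‖(εp:ℂ) • Ai (u - Tst u)‖ ≤ δ := by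
        rw [norm_smul]
        simp only [Complex.norm_real, Real.norm_eq_abs, abs_of_pos hεp0]
        calc εp * ‖Ai (u - Tst u)‖ ≤ ‖u - Tst u‖ := F1 _
          _ ≤ δ := hu2
      calc re (inner (𝕜 := ℂ) ((εp:ℂ) • Ai (u - Tst u)) u)
          ≤ ‖(εp:ℂ) • Ai (u - Tst u)‖ * ‖u‖ := re_inner_le_norm _ _
        _ ≤ δ * ‖u‖ := mul_le_mul_of_nonneg_right h6 (norm_nonneg u)
    have e4 : re (inner (𝕜 := ℂ) ((εp:ℂ) • Ai (Tst u)) u) ≤ s * ‖u‖^2 := by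
      have h7 : ‖(εp:ℂ) • Ai (Tst u)‖ ≤ s * ‖u‖ := by
        rw [norm_smul]
        simp only [Complex.norm_real, Real.norm_eq_abs, abs_of_pos hεp0]
        calc εp * ‖Ai (Tst u)‖ ≤ εp * (‖u‖ / s) :=
              mul_le_mul_of_nonneg_left (F3 u) (le_of_lt hεp0)
          _ = s * ‖u‖ := by rw [hεpdef]; field_simp
      calc re (inner (𝕜 := ℂ) ((εp:ℂ) • Ai (Tst u)) u)
          ≤ ‖(εp:ℂ) • Ai (Tst u)‖ * ‖u‖ := re_inner_le_norm _ _
        _ ≤ (s * ‖u‖) * ‖u‖ := mul_le_mul_of_nonneg_right h7 (norm_nonneg u)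
        _ = s * ‖u‖^2 := by ring
    calc ‖(εp:ℂ) • Ai u‖^2 = εp^2 * ‖Ai u‖^2 := e0
      _ ≤ εp * re (inner (𝕜 := ℂ) u (Ai u)) := e1
      _ = _ + _ := e2
      _ ≤ δ * ‖u‖ + s * ‖u‖^2 := add_le_add e3 e4
  have hfinal : ‖u - S u‖^2 ≤ ε^2 := by
    rw [hSx u]
    have h8 : δ * ‖u‖ ≤ ε^2/2 := by
      rw [hδdef]
      calc ε^2 / (2*Cb) * ‖u‖ ≤ ε^2/(2*Cb) * Cb := by
            apply mul_le_mul_of_nonneg_left huCb (by positivity)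
        _ = ε^2/2 := by field_simp
    have h9 : s * ‖u‖^2 ≤ ε^2/2 := by
      rw [hsdef]
      have : ‖u‖^2 ≤ Cb^2 := by nlinarith [norm_nonneg u]
      calc ε^2/(2*Cb^2) * ‖u‖^2 ≤ ε^2/(2*Cb^2) * Cb^2 := by
            apply mul_le_mul_of_nonneg_left this (by positivity)
        _ = ε^2/2 := by field_simp
    linarith [key]
  nlinarith [norm_nonneg (u - S u)]

end Contraction

end ComplexAux
end AuxProofs

set_option maxHeartbeats 1000000 in
/-- Every evanescent cocycle is an almost coboundary. -/
theorem evanescent_almostCoboundary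
    (G : Type) [Group G] [TopologicalSpace G] [IsTopologicalGroup G]
    [LocallyCompactSpace G] [SecondCountableTopology G]
    (H : Type) [NormedAddCommGroup H] [InnerProductSpace ℂ H] [CompleteSpace H]
    [TopologicalSpace.SeparableSpace H]
    (π : G →* (H →L[ℂ] H)) (hπ : IsUnitaryRep π)
    (c : G → H) (hc : IsCocycle π c) (he : IsEvanescent π c) :
    IsAlmostCoboundary π c := by
  classical
  intro Q hQ ε hε
  have hK : IsCompact (c '' Q) := hQ.image hc.1
  have htb := hK.totallyBounded
  rw [Metric.totallyBounded_iff] at htb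
  obtain ⟨t0, ht0fin, ht0cov⟩ := htb (ε/4) (by positivity)
  obtain ⟨S, hSI, hSnorm, hSest⟩ := contraction hπ he ht0fin.toFinset (by positivity : 0 < ε/2)
  obtain ⟨hScomm, ξ, hξ⟩ := hSI
  refine ⟨ξ, fun g hg => ?_⟩
  have hSc : S (c g) = ξ - π g ξ := hξ g
  obtain ⟨y, hy, hdy⟩ := Set.mem_iUnion₂.mp (ht0cov ⟨g, hg, rfl⟩)
  have h1 : ‖c g - y‖ ≤ ε/4 := by
    rw [Metric.mem_ball, dist_eq_norm] at hdy
    exact le_of_lt hdy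
  have h2 : ‖y - S y‖ ≤ ε/2 := hSest y (ht0fin.mem_toFinset.mpr hy)
  have h3 : ‖S (c g - y)‖ ≤ ε/4 := by
    calc ‖S (c g - y)‖ ≤ ‖S‖ * ‖c g - y‖ := ContinuousLinearMap.le_opNorm S _
      _ ≤ 1 * (ε/4) := mul_le_mul hSnorm h1 (norm_nonneg _) zero_le_one
      _ = ε/4 := one_mul _
  have hdecomp : c g - S (c g) = (y - S y) + ((c g - y) - S (c g - y)) := by
    rw [map_sub]
    abel
  calc ‖c g - (ξ - π g ξ)‖ = ‖c g - S (c g)‖ := by rw [hSc]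
    _ = ‖(y - S y) + ((c g - y) - S (c g - y))‖ := by rw [hdecomp]
    _ ≤ ‖y - S y‖ + ‖(c g - y) - S (c g - y)‖ := norm_add_le _ _
    _ ≤ ‖y - S y‖ + (‖c g - y‖ + ‖S (c g - y)‖) := by
        gcongr
        exact norm_sub_le _ _
    _ ≤ ε/2 + (ε/4 + ε/4) := by gcongr
    _ = ε := by ring


end Evan
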